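/- Suppose α ≤ 1, α_{i*}β ≤ d, and α - log^{-2}(n) ≤ α_{i*} ≤ α. Then the rate exponents satisfy α_{i*}(1+β)/(2α_{i*} + d - α_{i*}β) ≥ α(1+β)/(2α + [d - αβ]₊) - (1+β)(2α + d)/(log²(n)·(2α + [d - αβ]₊)²). -/

import Mathlib

/-!
Write `δ = α - αs ≤ log⁻² n`, `D = 2α + [d - αβ]₊` and `B = 2αs + d - αsβ`. It suffices to show
`α / D - αs / B ≤ δ (2α + d) / D²`. If `αβ ≤ d` the left side is exactly `d δ / (D B)`, and
`d D ≤ (2α + d) B`. If `αβ > d` it is `c / (2B)` with `c = d - αsβ`, and `c < δβ` forces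
`c (αs + δ) ≤ d δ`.
-/

/- Both sides are affine in `c`, and `c` ranges over `[0, d δ / (a + δ)]`: check the endpoints. -/
lemma two_mul_sq_mul_le_of_mul_le {a δ c d : ℝ} (ha : 0 < a) (hδ : 0 ≤ δ) (hc : 0 ≤ c)
    (hcd : c * (a + δ) ≤ d * δ) :
    2 * (a + δ) ^ 2 * c ≤ δ * (2 * a + c) * (2 * (a + δ) + d) := by
  have hα : 0 < a + δ := by linarith
  rcases le_or_gt (2 * (a + δ) ^ 2) (δ * (2 * (a + δ) + d)) with hK | hK
  · nlinarith [mul_nonneg hδ ha.le]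
  · refine le_of_mul_le_mul_left ?_ hα
    nlinarith [mul_le_mul_of_nonneg_right hcd (sub_nonneg.2 hK.le), mul_nonneg hδ ha.le,
      mul_nonneg (mul_nonneg hδ hδ) (sq_nonneg d),
      mul_nonneg (mul_nonneg hδ ha.le) (sq_nonneg (a + δ))]

section

variable {a α β d : ℝ}

lemma div_sub_div_le_of_mul_le (ha : 0 < a) (haα : a ≤ α) (hβ : 0 ≤ β) (haβ : a * β ≤ d)
    (h : α * β ≤ d) :
    α / (2 * α + (d - α * β)) - a / (2 * a + d - a * β) ≤
      (α - a) * (2 * α + d) / (2 * α + (d - α * β)) ^ 2 := by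
  have hD : 0 < 2 * α + (d - α * β) := by linarith
  have hB : 0 < 2 * a + d - a * β := by linarith
  have hd : 0 ≤ d := (mul_nonneg ha.le hβ).trans haβ
  have hdiff : α / (2 * α + (d - α * β)) - a / (2 * a + d - a * β) =
      d * (α - a) / ((2 * α + (d - α * β)) * (2 * a + d - a * β)) := by
    rw [div_sub_div _ _ hD.ne' hB.ne']
    ring
  have key : d * (2 * α + (d - α * β)) ≤ (2 * α + d) * (2 * a + d - a * β) := by
    nlinarith [mul_nonneg (mul_nonneg hd hβ) (sub_nonneg.2 haα)]
  rw [hdiff, div_le_div_iff₀ (by positivity) (by positivity)]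
  nlinarith [mul_le_mul_of_nonneg_left key (mul_nonneg (sub_nonneg.2 haα) hD.le)]

lemma div_sub_div_le_of_lt_mul (ha : 0 < a) (haα : a ≤ α) (haβ : a * β ≤ d)
    (h : d < α * β) :
    α / (2 * α) - a / (2 * a + d - a * β) ≤ (α - a) * (2 * α + d) / (2 * α) ^ 2 := by
  have hα : 0 < α := ha.trans_le haα
  have hB : 0 < 2 * a + d - a * β := by linarith
  have hdiff : α / (2 * α) - a / (2 * a + d - a * β) =
      (d - a * β) / (2 * (2 * a + d - a * β)) := by
    rw [div_sub_div _ _ (by positivity) hB.ne', div_eq_div_iff (by positivity) (by positivity)]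
    ring
  have key := two_mul_sq_mul_le_of_mul_le ha (sub_nonneg.2 haα) (sub_nonneg.2 haβ)
    (d := d) (by nlinarith)
  rw [add_sub_cancel] at key
  rw [hdiff, div_le_div_iff₀ (by positivity) (by positivity)]
  nlinarith

lemma div_sub_div_le (ha : 0 < a) (haα : a ≤ α) (hβ : 0 ≤ β) (haβ : a * β ≤ d) :
    α / (2 * α + max (d - α * β) 0) - a / (2 * a + d - a * β) ≤
      (α - a) * (2 * α + d) / (2 * α + max (d - α * β) 0) ^ 2 := by
  rcases le_or_gt (α * β) d with h | h
  · rw [max_eq_left (sub_nonneg.2 h)]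
    exact div_sub_div_le_of_mul_le ha haα hβ haβ h
  · rw [max_eq_right (sub_neg.2 h).le, add_zero]
    exact div_sub_div_le_of_lt_mul ha haα haβ h

end

theorem stmt_18_general (d : ℕ) (α αs β n : ℝ)
    (hαs0 : 0 < αs) (hβ : 0 ≤ β)
    (hαsβ : αs * β ≤ d)
    (hlo : α - ((Real.log n) ^ (2 : ℕ))⁻¹ ≤ αs) (hhi : αs ≤ α) :
    αs * (1 + β) / (2 * αs + d - αs * β) ≥
      α * (1 + β) / (2 * α + max ((d : ℝ) - α * β) 0) -
        (1 + β) * (2 * α + d) /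
          ((Real.log n) ^ (2 : ℕ) * (2 * α + max ((d : ℝ) - α * β) 0) ^ (2 : ℕ)) := by
  have key := div_sub_div_le hαs0 hhi hβ hαsβ
  set L := Real.log n ^ 2
  set D := 2 * α + max ((d : ℝ) - α * β) 0
  have hδ : (α - αs) * (2 * α + d) / D ^ 2 ≤ L⁻¹ * (2 * α + d) / D ^ 2 := by
    have h2αd : 0 ≤ 2 * α + d := by linarith [hαs0.trans_le hhi, (d.cast_nonneg : (0 : ℝ) ≤ d)]
    gcongr
    linarith
  calc α * (1 + β) / D - (1 + β) * (2 * α + d) / (L * D ^ 2)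
      = (1 + β) * (α / D - L⁻¹ * (2 * α + d) / D ^ 2) := by
        rw [div_mul_eq_div_div_swap]
        ring
    _ ≤ (1 + β) * (αs / (2 * αs + d - αs * β)) := by
      gcongr
      linarith
    _ = αs * (1 + β) / (2 * αs + d - αs * β) := by ring

/-- Rate-exponent stability under grid approximation: if `α ≤ 1`, `α_{i*}β ≤ d` and
`α - log^{-2}(n) ≤ α_{i*} ≤ α`, then
`α_{i*}(1+β)/(2α_{i*} + d - α_{i*}β) ≥ α(1+β)/(2α + [d-αβ]₊)
  - (1+β)(2α+d)/(log²(n)(2α + [d-αβ]₊)²)`. -/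
theorem stmt_18 (d : ℕ) (hd : 1 ≤ d) (α αs β n : ℝ)
    (hαs0 : 0 < αs) (hα1 : α ≤ 1) (hβ : 0 ≤ β) (hn : 1 < n)
    (hαsβ : αs * β ≤ d)
    (hlo : α - ((Real.log n) ^ (2 : ℕ))⁻¹ ≤ αs) (hhi : αs ≤ α) :
    αs * (1 + β) / (2 * αs + d - αs * β) ≥
      α * (1 + β) / (2 * α + max ((d : ℝ) - α * β) 0) -
        (1 + β) * (2 * α + d) /
          ((Real.log n) ^ (2 : ℕ) * (2 * α + max ((d : ℝ) - α * β) 0) ^ (2 : ℕ)) :=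
  stmt_18_general d α αs β n hαs0 hβ hαsβ hlo hhi
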